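/- arXiv:2603.23641 — 3 statements merged into one kernel-verified Lean document; each statement's English description precedes it below -/
import Mathlib

section
/- If d is odd, then for all natural numbers a, b, the d-th power of the Weyl operator is the identity: (X^a * Z^b)^d = 1. -/
/-! Weyl commutation `Z X = ω X Z` gives `z x = q x z` for `x = X ^ a`, `z = Z ^ b` and
`q = ω ^ (a b)`; sorting the factors of `(x z) ^ n` then produces
`(x z) ^ n = q ^ (n choose 2) x ^ n z ^ n`. For `n = d` we have `X ^ d = Z ^ d = 1`, and for odd `d`
the exponent `d (d - 1) / 2` is a multiple of `d`, so the phase is `1` as well. -/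

open Matrix Complex

/-- The primitive `d`-th root of unity `ω = exp(2πi/d)`. -/
noncomputable def omega (d : ℕ) : ℂ := Complex.exp (2 * Real.pi * Complex.I / d)

/-- The generalized Pauli shift matrix `X` on a `d`-dimensional qudit:
`X i j = 1` iff `i = j + 1 (mod d)`. -/
def PauliX (d : ℕ) [NeZero d] : Matrix (Fin d) (Fin d) ℂ :=
  Matrix.of fun i j => if i = j + 1 then 1 else 0

/-- The generalized Pauli phase matrix `Z = diag(1, ω, ω², …)`. -/
noncomputable def PauliZ (d : ℕ) [NeZero d] : Matrix (Fin d) (Fin d) ℂ :=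
  Matrix.diagonal fun j => omega d ^ (j : ℕ)

section QCommuting

variable {R M : Type*} [CommMonoid R] [Monoid M] [MulAction R M] [IsScalarTower R M M]
  [SMulCommClass R M M] {x z : M} {q : R}

theorem pow_mul_of_mul_eq_smul (h : z * x = q • (x * z)) (m : ℕ) :
    z ^ m * x = q ^ m • (x * z ^ m) := by
  induction m with
  | zero => simp
  | succ m ih =>
    rw [pow_succ, mul_assoc, h, mul_smul_comm, ← mul_assoc, ih, smul_mul_assoc, smul_smul,
      mul_assoc, ← pow_succ, ← pow_succ']

theorem pow_mul_pow_of_mul_eq_smul (h : z * x = q • (x * z)) (m n : ℕ) :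
    z ^ m * x ^ n = q ^ (m * n) • (x ^ n * z ^ m) := by
  induction n with
  | zero => simp
  | succ n ih =>
    rw [pow_succ, ← mul_assoc, ih, smul_mul_assoc, mul_assoc, pow_mul_of_mul_eq_smul h,
      mul_smul_comm, smul_smul, ← mul_assoc, ← pow_succ, ← pow_add, Nat.mul_succ]

theorem mul_pow_of_mul_eq_smul (h : z * x = q • (x * z)) (n : ℕ) :
    (x * z) ^ n = q ^ n.choose 2 • (x ^ n * z ^ n) := by
  induction n with
  | zero => simp
  | succ n ih =>
    rw [pow_succ, ih, smul_mul_assoc, mul_assoc, ← mul_assoc (z ^ n), pow_mul_of_mul_eq_smul h,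
      smul_mul_assoc, mul_smul_comm, smul_smul, ← pow_add, Nat.choose_succ_succ',
      Nat.choose_one_right, add_comm n, ← mul_assoc, ← mul_assoc, ← pow_succ, mul_assoc,
      ← pow_succ]

end QCommuting

theorem Odd.dvd_choose_two {n : ℕ} (hn : Odd n) : n ∣ n.choose 2 := by
  obtain ⟨m, rfl⟩ := hn
  refine ⟨m, ?_⟩
  rw [Nat.choose_two_right, Nat.add_sub_cancel, mul_left_comm, Nat.mul_div_cancel_left _ two_pos]

section Pauli

variable (d : ℕ) [NeZero d]

theorem isPrimitiveRoot_omega : IsPrimitiveRoot (omega d) d :=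
  Complex.isPrimitiveRoot_exp d (NeZero.ne d)

theorem omega_pow_mod (n : ℕ) : omega d ^ (n % d) = omega d ^ n := by
  simpa [← (isPrimitiveRoot_omega d).eq_orderOf] using pow_mod_orderOf (omega d) n

theorem PauliX_eq_permMatrixHom : PauliX d = permMatrixHom (Equiv.addRight (1 : Fin d)) := by
  ext i j
  simp [PauliX, PEquiv.toMatrix_apply, add_neg_eq_iff_eq_add]

theorem PauliX_pow_self : PauliX d ^ d = 1 := by
  have h : (d • 1 : Fin d) = 0 := by simpa using card_nsmul_eq_zero (G := Fin d) (x := 1)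
  rw [PauliX_eq_permMatrixHom, ← map_pow, Equiv.nsmul_addRight, h, Equiv.addRight_zero, map_one]

theorem PauliZ_pow_self : PauliZ d ^ d = 1 := by
  rw [PauliZ, diagonal_pow, ← diagonal_one]
  congr 1
  ext j
  rw [Pi.pow_apply, pow_right_comm, (isPrimitiveRoot_omega d).pow_eq_one, one_pow]

theorem PauliZ_mul_PauliX : PauliZ d * PauliX d = omega d • (PauliX d * PauliZ d) := by
  ext i j
  by_cases h : i = j + 1
  · simp [PauliZ, PauliX, h, Fin.val_add, omega_pow_mod, pow_add, mul_comm]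
  · simp [PauliZ, PauliX, h]

end Pauli

theorem weyl_pow_dim_eq_one_of_odd (d : ℕ) [NeZero d] (hd : Odd d) (a b : ℕ) :
    (PauliX d ^ a * PauliZ d ^ b) ^ d = 1 := by
  have hZX := pow_mul_pow_of_mul_eq_smul (PauliZ_mul_PauliX d) b a
  have hX : PauliX d ^ (a * d) = 1 := by rw [pow_mul', PauliX_pow_self, one_pow]
  have hZ : (PauliZ d ^ b) ^ d = 1 := by rw [pow_right_comm, PauliZ_pow_self, one_pow]
  have hω : (omega d ^ (b * a)) ^ d.choose 2 = 1 := by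
    obtain ⟨k, hk⟩ := hd.dvd_choose_two
    rw [hk, ← pow_mul, mul_left_comm, pow_mul, (isPrimitiveRoot_omega d).pow_eq_one, one_pow]
  rw [mul_pow_of_mul_eq_smul hZX, hω, ← pow_mul, hX, hZ, one_smul, one_mul]
end

section
/- The generalized phase gate S conjugates the Pauli matrices according to S * X * Sᴴ = τ • (X * Z) and S * Z * Sᴴ = Z, for every dimension d ≥ 1 (this is the matrix identity underlying the tableau update rule z ← z + x with phase update for the S gate). -/
open Matrix Complex

/-- The secondary phase `τ = exp(πi(d²+1)/d)`, satisfying `τ² = ω`. -/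
noncomputable def tau (d : ℕ) : ℂ :=
  Complex.exp (Real.pi * Complex.I * (d ^ 2 + 1) / d)

/-- The generalized phase gate `S = diag(τ^{j²})`. -/
noncomputable def PhaseS (d : ℕ) : Matrix (Fin d) (Fin d) ℂ :=
  Matrix.diagonal fun j => tau d ^ ((j : ℕ) ^ 2)

/-!
Since `|τ| = 1`, the diagonal gate `S` is unitary, so it suffices to prove the commutation
rules `S X = τ • X Z S` and `S Z = Z S`. The second holds because diagonal matrices commute.
The first is, entrywise, `τ^((j+1)²) = τ · ω^j · τ^(j²)`, i.e. `τ² = ω`, except that `j + 1`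
is reduced mod `d`. This is harmless because `n ↦ τ^(n²)` is `d`-periodic:
`τ^d = (-1)^(d²+1)` gives `τ^(2d) = 1`, and `τ^(d²) = 1` since `d(d²+1)` is even.
-/

theorem Matrix.diagonal_mul_conjTranspose_self {n α : Type*} [Fintype n] [DecidableEq n]
    [Semiring α] [StarRing α] {v : n → α} (hv : ∀ i, v i * star (v i) = 1) :
    diagonal v * (diagonal v)ᴴ = 1 := by
  rw [diagonal_conjTranspose, diagonal_mul_diagonal, ← diagonal_one]
  exact congrArg diagonal (funext hv)

theorem pow_sq_eq_pow_sq_of_modEq {M : Type*} [Monoid M] {t : M} {d a b : ℕ}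
    (h2d : t ^ (2 * d) = 1) (hdd : t ^ (d ^ 2) = 1) (hab : a ≡ b [MOD d]) :
    t ^ (a ^ 2) = t ^ (b ^ 2) := by
  have reduce (n : ℕ) : t ^ (n ^ 2) = t ^ ((n % d) ^ 2) := by
    conv_lhs => rw [← Nat.mod_add_div n d]
    rw [show (n % d + d * (n / d)) ^ 2
        = (n % d) ^ 2 + 2 * d * (n % d * (n / d)) + d ^ 2 * (n / d) ^ 2 by ring,
      pow_add, pow_add, pow_mul t (2 * d), pow_mul t (d ^ 2), h2d, hdd, one_pow, one_pow,
      mul_one, mul_one]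
  rw [reduce a, reduce b, hab]

theorem tau_pow_self (d : ℕ) [NeZero d] : tau d ^ d = (-1) ^ (d ^ 2 + 1) := by
  have hd : (d : ℂ) ≠ 0 := NeZero.ne _
  rw [tau, ← Complex.exp_nat_mul, ← Complex.exp_pi_mul_I, ← Complex.exp_nat_mul]
  congr 1
  push_cast
  field_simp

theorem tau_pow_two_mul_self (d : ℕ) [NeZero d] : tau d ^ (2 * d) = 1 := by
  rw [pow_mul', tau_pow_self, ← pow_mul', (even_two_mul _).neg_one_pow]

theorem tau_pow_self_sq (d : ℕ) [NeZero d] : tau d ^ (d ^ 2) = 1 := by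
  have heven : Even ((d ^ 2 + 1) * d) := by
    rcases Nat.even_or_odd d with h | h <;> simp [parity_simps, h]
  rw [sq, pow_mul, tau_pow_self, ← pow_mul, heven.neg_one_pow]

theorem tau_sq (d : ℕ) [NeZero d] : tau d ^ 2 = omega d := by
  have hd : (d : ℂ) ≠ 0 := NeZero.ne _
  rw [tau, omega, ← Complex.exp_nat_mul, show ((2 : ℕ) : ℂ) * (Real.pi * I * (d ^ 2 + 1) / d)
      = 2 * Real.pi * I / d + d * (2 * Real.pi * I) by push_cast; field_simp; ring,
    Complex.exp_add, Complex.exp_nat_mul_two_pi_mul_I, mul_one]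

theorem tau_mul_star_self (d : ℕ) : tau d * star (tau d) = 1 := by
  rw [tau, Complex.star_def, ← Complex.exp_conj, ← Complex.exp_add, ← Complex.exp_zero]
  congr 1
  simp [map_div₀]
  ring

theorem tau_pow_sq_add_one (d : ℕ) [NeZero d] (j : Fin d) :
    tau d ^ ((j + 1 : Fin d) : ℕ) ^ 2 = tau d * omega d ^ (j : ℕ) * tau d ^ (j : ℕ) ^ 2 := by
  have hmod : ((j + 1 : Fin d) : ℕ) ≡ j + 1 [MOD d] := by
    rw [Fin.val_add, Fin.val_one']
    exact (Nat.mod_modEq _ d).trans ((Nat.mod_modEq 1 d).add_left j)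
  rw [pow_sq_eq_pow_sq_of_modEq (tau_pow_two_mul_self d) (tau_pow_self_sq d) hmod, ← tau_sq,
    ← pow_mul, ← pow_succ', ← pow_add]
  ring_nf

theorem phaseS_mul_conjTranspose_self (d : ℕ) : PhaseS d * (PhaseS d)ᴴ = 1 :=
  diagonal_mul_conjTranspose_self fun j => by
    rw [star_pow, ← mul_pow, tau_mul_star_self, one_pow]

theorem phaseS_mul_pauliX (d : ℕ) [NeZero d] :
    PhaseS d * PauliX d = tau d • (PauliX d * PauliZ d * PhaseS d) := by
  ext i j
  simp only [PhaseS, PauliX, PauliZ, diagonal_mul, mul_diagonal, of_apply, Matrix.smul_apply,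
    smul_eq_mul]
  split_ifs with h
  · rw [h, tau_pow_sq_add_one]
    ring
  · simp

theorem phaseS_mul_pauliZ (d : ℕ) [NeZero d] : PhaseS d * PauliZ d = PauliZ d * PhaseS d :=
  commute_diagonal _ _

theorem phase_gate_conjugation (d : ℕ) [NeZero d] :
    PhaseS d * PauliX d * (PhaseS d)ᴴ = tau d • (PauliX d * PauliZ d) ∧
    PhaseS d * PauliZ d * (PhaseS d)ᴴ = PauliZ d := by
  constructor
  · rw [phaseS_mul_pauliX, smul_mul_assoc, Matrix.mul_assoc _ (PhaseS d),
      phaseS_mul_conjTranspose_self, Matrix.mul_one]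
  · rw [phaseS_mul_pauliZ, Matrix.mul_assoc, phaseS_mul_conjTranspose_self, Matrix.mul_one]
end

section
/- (Proposition 1.) Let U : Matrix (Fin n → Fin d) (Fin n → Fin d) ℂ be unitary (Uᴴ * U = 1 and U * Uᴴ = 1), and let W be a matrix such that W commutes with U * Z_j * Uᴴ for every j : Fin n. Suppose the conjugated operator is a Weyl operator up to a nonzero phase, i.e. there exist c : ℂ with c ≠ 0 and a, b : Fin n → Fin d such that Uᴴ * W * U = c • (XW a * ZW b). Then a = 0, so Uᴴ * W * U is a Z-type operator, and (Uᴴ * W * U).mulVec e₀ = c • e₀ where e₀ : (Fin n → Fin d) → ℂ is the standard basis vector e₀ v = 1 if v = 0 and 0 otherwise (the computational zero state |0⟩^⊗n). -/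
open Matrix Complex

/-- The `n`-qudit shift-type Weyl matrix: the permutation matrix of `v ↦ v + a`
(componentwise addition mod `d`). -/
def XW (n d : ℕ) (a : Fin n → Fin d) :
    Matrix (Fin n → Fin d) (Fin n → Fin d) ℂ :=
  Matrix.of fun v w => if v = w + a then 1 else 0

/-- The `n`-qudit phase-type Weyl matrix: the diagonal matrix with entry
`ω^(∑ i, b i * v i)` at position `v`. -/
noncomputable def ZW (n d : ℕ) (b : Fin n → Fin d) :
    Matrix (Fin n → Fin d) (Fin n → Fin d) ℂ :=
  Matrix.diagonal fun v => omega d ^ (∑ i, (b i : ℕ) * (v i : ℕ))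

/-- The single-qudit `Z` operator acting on qudit `j` of an `n`-qudit register. -/
noncomputable def Zj (n d : ℕ) [NeZero d] (j : Fin n) :
    Matrix (Fin n → Fin d) (Fin n → Fin d) ℂ :=
  ZW n d (Pi.single j 1)

theorem conjugated_noise_is_Z_type (n d : ℕ) [NeZero d] (hn : 1 ≤ n)
    (U W : Matrix (Fin n → Fin d) (Fin n → Fin d) ℂ)
    (hU₁ : Uᴴ * U = 1) (hU₂ : U * Uᴴ = 1)
    (hW : ∀ j : Fin n,
      W * (U * Zj n d j * Uᴴ) = (U * Zj n d j * Uᴴ) * W)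
    (c : ℂ) (hc : c ≠ 0) (a b : Fin n → Fin d)
    (hconj : Uᴴ * W * U = c • (XW n d a * ZW n d b)) :
    a = 0 ∧
      (Uᴴ * W * U).mulVec
          (fun v : Fin n → Fin d => if v = 0 then (1 : ℂ) else 0) =
        c • (fun v : Fin n → Fin d => if v = 0 then (1 : ℂ) else 0) := by

  -- `Uᴴ * U = 1` lets us cancel
  have hU₁' : ∀ M : Matrix (Fin n → Fin d) (Fin n → Fin d) ℂ, Uᴴ * (U * M) = M := by
    intro M; rw [← Matrix.mul_assoc, hU₁, Matrix.one_mul]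
  -- the conjugated Weyl operator commutes with every `Z_j`
  have hcomm : ∀ j, (XW n d a * ZW n d b) * Zj n d j
      = Zj n d j * (XW n d a * ZW n d b) := by
    intro j
    have h1 : (Uᴴ * W * U) * Zj n d j = Zj n d j * (Uᴴ * W * U) := by
      have h := congrArg (fun M => Uᴴ * M * U) (hW j)
      simp only [Matrix.mul_assoc, hU₁', hU₁, Matrix.mul_one] at h
      rw [Matrix.mul_assoc, Matrix.mul_assoc, Matrix.mul_assoc]
      exact h
    rw [hconj] at h1
    rw [smul_mul_assoc, mul_smul_comm] at h1
    exact smul_right_injective _ hc h1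
  -- first conclusion: `a = 0`
  have ha : a = 0 := by
    funext j
    rcases Nat.lt_or_ge d 2 with hd | hd
    · haveI : d = 1 := by
        have := Nat.pos_of_ne_zero (NeZero.ne d); omega
      subst this
      exact Subsingleton.elim _ _
    · have h := Matrix.ext_iff.2 (hcomm j) a 0
      simp only [Zj, ZW, XW, Matrix.mul_diagonal, Matrix.diagonal_mul, Matrix.of_apply] at h
      simp only [zero_add, if_pos rfl, if_true, Pi.zero_apply, Fin.val_zero, mul_zero,
        Finset.sum_const_zero, pow_zero, mul_one, one_mul] at h
      have hsum : (∑ i, ((Pi.single j 1 : Fin n → Fin d) i : ℕ) * (a i : ℕ)) = (a j : ℕ) := by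
        rw [Fintype.sum_eq_single j]
        · rw [Pi.single_eq_same, Fin.val_one' d, Nat.mod_eq_of_lt hd, one_mul]
        · intro i hi
          simp [Pi.single_eq_of_ne hi]
      rw [hsum] at h
      have hprim : IsPrimitiveRoot (omega d) d := Complex.isPrimitiveRoot_exp d (NeZero.ne d)
      have hdvd : d ∣ (a j : ℕ) := (IsPrimitiveRoot.pow_eq_one_iff_dvd hprim _).1 h.symm
      exact Fin.ext (Nat.eq_zero_of_dvd_of_lt hdvd (a j).isLt)
  refine ⟨ha, ?_⟩
  subst ha
  -- the action on the zero state
  have hM : (XW n d 0 * ZW n d b).mulVec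
      (fun v : Fin n → Fin d => if v = 0 then (1 : ℂ) else 0) =
      (fun v : Fin n → Fin d => if v = 0 then (1 : ℂ) else 0) := by
    funext v
    simp only [Matrix.mulVec, dotProduct, XW, ZW, Matrix.mul_diagonal, Matrix.of_apply,
      mul_ite, mul_one, mul_zero]
    rw [Finset.sum_eq_single (0 : Fin n → Fin d)]
    · simp
    · intro w _ hw
      simp [hw]
    · simp
  rw [hconj, Matrix.smul_mulVec, hM]
end
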